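/- arXiv:2510.16689 — 8 statements merged into one kernel-verified Lean document; each statement's English description precedes it below -/
import Mathlib

section
/- Let A ∈ ℝ^{n×n}, B ∈ ℝ^{n×m}, and 𝒵 ⊆ ℝ^n a subspace. Then A𝒵 ⊆ 𝒵 + Im B if and only if there exists F ∈ ℝ^{m×n} such that (A − BF)𝒵 ⊆ 𝒵. -/
/-- Controlled invariance of a subspace `𝒵` is equivalent to the existence of a
state-feedback friend `F` rendering `𝒵` invariant for the closed-loop matrix `A - BF`. -/
theorem controlled_invariance_iff_friend {n m : ℕ}
    (A : Matrix (Fin n) (Fin n) ℝ) (B : Matrix (Fin n) (Fin m) ℝ)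
    (Z : Submodule ℝ (Fin n → ℝ)) :
    Z.map A.mulVecLin ≤ Z ⊔ LinearMap.range B.mulVecLin ↔
      ∃ F : Matrix (Fin m) (Fin n) ℝ, Z.map (A - B * F).mulVecLin ≤ Z := by
  constructor
  · intro h
    -- Build a linear map `f : Z → ℝ^m` with `A z - B (f z) ∈ Z`.
    set g : (Fin m → ℝ) →ₗ[ℝ] (Fin n → ℝ) ⧸ Z := Z.mkQ.comp B.mulVecLin with hg
    have hrange : ∀ z : Z, Z.mkQ (A.mulVecLin z) ∈ LinearMap.range g := by
      intro z
      obtain ⟨w, hw, u, hu, hwu⟩ := Submodule.mem_sup.mp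
        (h (Submodule.mem_map_of_mem z.2))
      obtain ⟨v, hv⟩ := hu
      refine ⟨v, ?_⟩
      simp only [hg, LinearMap.comp_apply, hv]
      rw [← hwu, map_add]
      simp [Submodule.mkQ_apply, (Submodule.Quotient.mk_eq_zero Z).mpr hw]
    set f : Z →ₗ[ℝ] LinearMap.range g :=
      LinearMap.codRestrict (LinearMap.range g)
        ((Z.mkQ.comp A.mulVecLin).comp Z.subtype) (fun z => hrange z) with hf
    obtain ⟨hlift, hlift_eq⟩ := Module.projective_lifting_property
      g.rangeRestrict f (LinearMap.surjective_rangeRestrict g)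
    obtain ⟨H, hH⟩ := LinearMap.exists_extend hlift
    refine ⟨LinearMap.toMatrix' H, ?_⟩
    rintro x ⟨z, hz, rfl⟩
    have key : B.mulVecLin (H z) - A.mulVecLin z ∈ Z := by
      have h1 : g.rangeRestrict (hlift ⟨z, hz⟩) = f ⟨z, hz⟩ := by
        rw [← hlift_eq]; rfl
      have h2 : g (hlift ⟨z, hz⟩) = Z.mkQ (A.mulVecLin z) := congrArg Subtype.val h1
      have h3 : hlift ⟨z, hz⟩ = H z := by
        have := congrFun (congrArg DFunLike.coe hH) ⟨z, hz⟩
        exact this.symm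
      rw [h3] at h2
      have : Z.mkQ (B.mulVecLin (H z) - A.mulVecLin z) = 0 := by
        rw [map_sub, ← h2]; simp [hg]
      exact (Submodule.Quotient.mk_eq_zero Z).mp this
    have hcalc : (A - B * LinearMap.toMatrix' H).mulVecLin z
        = A.mulVecLin z - B.mulVecLin (H z) := by
      simp only [Matrix.mulVecLin_apply, Matrix.sub_mulVec, ← Matrix.mulVec_mulVec]
      congr 1
      have : (LinearMap.toMatrix' H).mulVec z = H z := by
        have := Matrix.toLin'_toMatrix' H
        calc (LinearMap.toMatrix' H).mulVec z
            = Matrix.toLin' (LinearMap.toMatrix' H) z := rfl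
          _ = H z := by rw [this]
      rw [this]
    rw [hcalc]
    have := Z.neg_mem key
    simpa using this
  · rintro ⟨F, hF⟩ x ⟨z, hz, rfl⟩
    have h1 : (A - B * F).mulVecLin z ∈ Z := hF ⟨z, hz, rfl⟩
    have h2 : A.mulVecLin z = (A - B * F).mulVecLin z + B.mulVecLin (F.mulVec z) := by
      simp [Matrix.mulVecLin_apply, Matrix.sub_mulVec, ← Matrix.mulVec_mulVec]
    rw [h2]
    exact Submodule.add_mem_sup h1 ⟨F.mulVec z, rfl⟩
end

section
/- Let A ∈ ℝ^{n×n}, C ∈ ℝ^{p×n}, and S ⊆ ℝ^n a subspace that is (C,A)-invariant, i.e., A(S ∩ ker C) ⊆ S. Then the orthogonal complement S^⊥ is (Aᵀ, Cᵀ)-controlled invariant, i.e., Aᵀ S^⊥ ⊆ S^⊥ + Im Cᵀ. -/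
open Matrix Submodule

/-!
Transposes of real matrices are adjoints, so the claim is about `A†` and `C†` on a finite
dimensional inner product space. If `W.map A ≤ S` then `A†` sends `Sᗮ` into `Wᗮ`; taking
`W = S ⊓ ker C`, it remains to note `(S ⊓ ker C)ᗮ = Sᗮ ⊔ (ker C)ᗮ = Sᗮ ⊔ range C†`.
-/

section

variable {𝕜 E F : Type*} [RCLike 𝕜] [NormedAddCommGroup E] [InnerProductSpace 𝕜 E]
  [NormedAddCommGroup F] [InnerProductSpace 𝕜 F]

theorem Submodule.orthogonal_inf [FiniteDimensional 𝕜 E] (K₁ K₂ : Submodule 𝕜 E) :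
    (K₁ ⊓ K₂)ᗮ = K₁ᗮ ⊔ K₂ᗮ := by
  conv_lhs => rw [← K₁.orthogonal_orthogonal, ← K₂.orthogonal_orthogonal, inf_orthogonal,
    orthogonal_orthogonal]

variable [FiniteDimensional 𝕜 E] [FiniteDimensional 𝕜 F]

theorem LinearMap.map_adjoint_orthogonal_le {A : E →ₗ[𝕜] F} {W : Submodule 𝕜 E}
    {S : Submodule 𝕜 F} (h : W.map A ≤ S) : Sᗮ.map A.adjoint ≤ Wᗮ := by
  rintro _ ⟨x, hx, rfl⟩ y hy
  rw [LinearMap.adjoint_inner_right]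
  exact hx _ (h ⟨y, hy, rfl⟩)

theorem LinearMap.map_adjoint_orthogonal_le_sup_range_adjoint {A : E →ₗ[𝕜] E}
    {C : E →ₗ[𝕜] F} {S : Submodule 𝕜 E} (hS : (S ⊓ LinearMap.ker C).map A ≤ S) :
    Sᗮ.map A.adjoint ≤ Sᗮ ⊔ LinearMap.range C.adjoint :=
  calc Sᗮ.map A.adjoint ≤ (S ⊓ LinearMap.ker C)ᗮ := map_adjoint_orthogonal_le hS
    _ = Sᗮ ⊔ LinearMap.range C.adjoint := by rw [orthogonal_inf, C.orthogonal_ker]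

end

theorem Matrix.toEuclideanLin_transpose_eq_adjoint {m n : Type*} [Fintype m] [Fintype n]
    [DecidableEq m] [DecidableEq n] (A : Matrix m n ℝ) :
    Aᵀ.toEuclideanLin = A.toEuclideanLin.adjoint := by
  rw [← toEuclideanLin_conjTranspose_eq_adjoint, conjTranspose_eq_transpose_of_trivial]

/-- Duality: if `S` is `(C,A)`-invariant, i.e. `A(S ∩ ker C) ⊆ S`, then `S^⊥` is
`(Aᵀ,Cᵀ)`-controlled invariant, i.e. `Aᵀ S^⊥ ⊆ S^⊥ + Im Cᵀ`. -/
theorem conditioned_invariant_dual {n p : ℕ}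
    (A : Matrix (Fin n) (Fin n) ℝ) (C : Matrix (Fin p) (Fin n) ℝ)
    (S : Submodule ℝ (EuclideanSpace ℝ (Fin n)))
    (hS : (S ⊓ LinearMap.ker (Matrix.toEuclideanLin C)).map (Matrix.toEuclideanLin A) ≤ S) :
    Sᗮ.map (Matrix.toEuclideanLin Aᵀ) ≤ Sᗮ ⊔ LinearMap.range (Matrix.toEuclideanLin Cᵀ) := by
  rw [toEuclideanLin_transpose_eq_adjoint, toEuclideanLin_transpose_eq_adjoint]
  exact LinearMap.map_adjoint_orthogonal_le_sup_range_adjoint hS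
end

section
/- Let G = (V,E) be a finite digraph with disturbance set 𝒟, target set 𝒯, input set ℬ, with 𝒟 ∩ 𝒯 = ∅ and 𝒟 ∩ ℬ = ∅. Let Z* be the maximal controlled invariant (with respect to ℬ) subset of V ∖ 𝒯. Then 𝒟 ⊆ Z* if and only if every directed path from a node of 𝒟 to a node of 𝒯 intersects ℬ. -/
variable {V : Type*} [Fintype V]

/-- A directed path in the digraph `E`: an injective sequence of nodes with
consecutive edges. -/
def IsPath (E : V → V → Prop) {k : ℕ} (p : Fin (k + 1) → V) : Prop :=
  Function.Injective p ∧ ∀ i : Fin k, E (p i.castSucc) (p i.succ)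

/-- Graphical solvability of the DDP by state feedback: the disturbance set `𝒟` is
contained in the maximal controlled invariant subset `Z*` of `V ∖ 𝒯` iff every
directed path from `𝒟` to `𝒯` intersects the input set `ℬ`. -/
theorem DDPSF_solvable_iff_paths_cut (E : V → V → Prop) (D T B Zstar : Set V)
    (hDT : D ∩ T = ∅) (hDB : D ∩ B = ∅)
    (hZsub : Zstar ⊆ Tᶜ)
    (hZinv : ∀ i ∈ Zstar, ∀ j, E i j → j ∈ Zstar ∪ B)
    (hZmax : ∀ W : Set V, W ⊆ Tᶜ → (∀ i ∈ W, ∀ j, E i j → j ∈ W ∪ B) → W ⊆ Zstar) :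
    D ⊆ Zstar ↔
      ∀ (k : ℕ) (p : Fin (k + 1) → V), IsPath E p →
        p 0 ∈ D → p (Fin.last k) ∈ T → ∃ s, p s ∈ B := by
  constructor
  · intro hD k p hp h0 hlast
    by_contra hB
    push_neg at hB
    have hZ : ∀ i : Fin (k + 1), p i ∈ Zstar := by
      intro i
      induction i using Fin.induction with
      | zero => exact hD h0
      | succ i ih =>
        have := hZinv _ ih _ (hp.2 i)
        rcases this with h | h
        · exact h
        · exact absurd h (hB _)
    exact hZsub (hZ (Fin.last k)) hlast
  · intro hcut
    set W : Set V := {v | ∃ (k : ℕ) (p : Fin (k + 1) → V), IsPath E p ∧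
      p 0 ∈ D ∧ p (Fin.last k) = v ∧ ∀ s, p s ∉ B} with hW
    have hDW : D ⊆ W := by
      intro v hv
      refine ⟨0, fun _ => v, ⟨fun a b _ => Fin.ext (by omega), fun i => i.elim0⟩,
        hv, rfl, ?_⟩
      intro s hsB
      exact Set.eq_empty_iff_forall_notMem.mp hDB v ⟨hv, hsB⟩
    have hWT : W ⊆ Tᶜ := by
      rintro v ⟨k, p, hp, h0, hlast, hB⟩ hvT
      obtain ⟨s, hs⟩ := hcut k p hp h0 (hlast ▸ hvT)
      exact hB s hs
    have hWinv : ∀ i ∈ W, ∀ j, E i j → j ∈ W ∪ B := by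
      rintro v ⟨k, p, hp, h0, hlast, hB⟩ j hij
      by_cases hjB : j ∈ B
      · exact Or.inr hjB
      left
      by_cases hjr : ∃ s : Fin (k + 1), p s = j
      · -- prefix path
        obtain ⟨s, hs⟩ := hjr
        refine ⟨s.val, fun i => p ⟨i.val, by omega⟩, ⟨?_, ?_⟩, ?_, ?_, ?_⟩
        · intro a b hab
          have := hp.1 hab
          exact Fin.ext (by simpa using congrArg Fin.val this)
        · intro i
          have hi : i.val < k := by omega
          exact hp.2 ⟨i.val, hi⟩
        · exact h0
        · simpa using hs
        · intro t
          exact hB _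
      · -- extend path
        push_neg at hjr
        refine ⟨k + 1, fun i => if h : i.val < k + 1 then p ⟨i.val, h⟩ else j,
          ⟨?_, ?_⟩, ?_, ?_, ?_⟩
        · intro a b hab
          by_cases ha : a.val < k + 1 <;> by_cases hb : b.val < k + 1 <;>
            simp [ha, hb] at hab
          · exact Fin.ext (by simpa using congrArg Fin.val (hp.1 hab))
          · exact absurd hab (hjr _)
          · exact absurd hab.symm (hjr _)
          · omega
        · intro i
          by_cases hi : i.val < k
          · have h1 : i.castSucc.val < k + 1 := by
              simp only [Fin.coe_castSucc]; omega
            have h2 : i.succ.val < k + 1 := by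
              simp only [Fin.val_succ]; omega
            dsimp only
            rw [dif_pos h1, dif_pos h2]
            exact hp.2 ⟨i.val, hi⟩
          · have hik : i.val = k := by omega
            have h1 : i.castSucc.val < k + 1 := by
              simp only [Fin.coe_castSucc]; omega
            have h2 : ¬ i.succ.val < k + 1 := by
              simp only [Fin.val_succ]; omega
            dsimp only
            rw [dif_pos h1, dif_neg h2]
            have he : (⟨i.castSucc.val, h1⟩ : Fin (k + 1)) = Fin.last k := by
              ext; simpa using hik
            rw [he, hlast]
            exact hij
        · simpa using h0
        · simp [Fin.last]
        · intro t
          by_cases ht : t.val < k + 1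
          · simpa [ht] using hB ⟨t.val, ht⟩
          · simpa [ht] using hjB
    exact fun v hv => hZmax W hWT hWinv (hDW hv)
end

section
/- Let G = (V,E) be a finite digraph, 𝒟, 𝒯, ℬ, 𝒞 ⊆ V with 𝒟 ∩ 𝒯 = ∅, 𝒟 ∩ ℬ = ∅, 𝒯 ∩ 𝒞 = ∅. Suppose there exists a set W with 𝒟 ⊆ W ⊆ V ∖ 𝒯 that is both controlled invariant (edges leaving W land in ℬ) and conditioned invariant (edges leaving W start in 𝒞). Then every directed path from 𝒟 to 𝒯 contains an edge (v_p, v_{p+1}) with v_p ∈ 𝒞 and v_{p+1} ∈ ℬ. -/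
variable {V : Type*} [Fintype V]

/-- Necessity direction of the graphical DDPOF solvability condition: if there is a
set `W` with `𝒟 ⊆ W ⊆ V ∖ 𝒯` that is both controlled and conditioned invariant,
then every directed path from `𝒟` to `𝒯` contains an edge with tail in `𝒞` and
head in `ℬ`. -/
theorem DDPOF_paths_of_invariant_set (E : V → V → Prop) (D T B C W : Set V)
    (hDT : D ∩ T = ∅) (hDB : D ∩ B = ∅) (hTC : T ∩ C = ∅)
    (hDW : D ⊆ W) (hWT : W ⊆ Tᶜ)
    (hctrl : ∀ i ∈ W, ∀ j, E i j → j ∈ W ∪ B)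
    (hcond : ∀ i ∈ W, i ∉ C → ∀ j, E i j → j ∈ W) :
    ∀ (k : ℕ) (p : Fin (k + 1) → V), IsPath E p →
      p 0 ∈ D → p (Fin.last k) ∈ T →
      ∃ s : Fin k, p s.castSucc ∈ C ∧ p s.succ ∈ B := by
  intro k p hp h0 hlast
  have hW0 : p 0 ∈ W := hDW h0
  have hWlast : p (Fin.last k) ∉ W := fun h => hWT h hlast
  classical
  have hQ : ∃ n, ∃ h : n < k + 1, p ⟨n, h⟩ ∉ W :=
    ⟨k, Nat.lt_succ_self k, hWlast⟩
  let n := Nat.find hQ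
  obtain ⟨hn, hnW⟩ := Nat.find_spec hQ
  have hnpos : 0 < n := by
    rcases Nat.eq_zero_or_pos n with h | h
    · exfalso; apply hnW
      have : (⟨n, hn⟩ : Fin (k + 1)) = 0 := by
        ext; simpa using h
      rw [this]; exact hW0
    · exact h
  have hpred : n - 1 < n := Nat.sub_lt hnpos one_pos
  have hpredk : n - 1 < k := by omega
  set s : Fin k := ⟨n - 1, hpredk⟩ with hs
  have hsucc : (s.succ : Fin (k + 1)) = ⟨n, hn⟩ := by
    ext; simp [hs, Fin.succ]; omega
  have hprevW : p s.castSucc ∈ W := by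
    by_contra h
    exact Nat.find_min hQ hpred ⟨by omega, h⟩
  have hE : E (p s.castSucc) (p s.succ) := hp.2 s
  have hsW : p s.succ ∉ W := by rw [hsucc]; exact hnW
  refine ⟨s, ?_, ?_⟩
  · by_contra hC
    exact hsW (hcond _ hprevW hC _ hE)
  · rcases hctrl _ hprevW _ hE with h | h
    · exact absurd h hsW
    · exact h
end

section
/- Let G = (V,E) be a finite digraph, with 𝒟, 𝒯, ℬ, 𝒞 ⊆ V satisfying 𝒟 ∩ 𝒯 = ∅, 𝒟 ∩ ℬ = ∅, 𝒯 ∩ 𝒞 = ∅. Let S* be the minimal conditioned invariant (w.r.t. 𝒞) superset of 𝒟 and Z* the maximal controlled invariant (w.r.t. ℬ) subset of V ∖ 𝒯. Suppose that for every directed path P_j = (v_1, …, v_{κ_j}) from v_1 ∈ 𝒟 to v_{κ_j} ∈ 𝒯, the index o_j = min{s < κ_j : v_s ∈ 𝒞 ∩ P_j} and the index i_j = max{s ≥ 2 : v_s ∈ ℬ ∩ P_j} are both well-defined and satisfy o_j < i_j. Then S* ⊆ Z*. -/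
/-!
A vertex of `S*` is reached from `𝒟` by a walk whose non-final vertices avoid `𝒞`, while a
vertex outside `Z*` reaches `𝒯` by a walk whose non-initial vertices avoid `ℬ`. A vertex in
`S* ∖ Z*` would therefore give a walk from `𝒟` to `𝒯` with a split point before which it avoids
`𝒞` and after which it avoids `ℬ`. Cutting out cycles keeps such a split, so there is a split
path, and on it every `𝒞`-vertex comes at or after the split and every `ℬ`-vertex at or before
it, contradicting `o_j < i_j`.
-/

variable {V : Type*} [Fintype V]

section SplitWalk

open Relation Set

variable {α : Type*} {E : α → α → Prop} {C B : Set α}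

structure IsSplitWalk (E : α → α → Prop) (C B : Set α) (N m : ℕ) (f : ℕ → α) : Prop where
  adj : ∀ s < N, E (f s) (f (s + 1))
  avoidC : ∀ s < m, f s ∉ C
  avoidB : ∀ s, m < s → s ≤ N → f s ∉ B

theorem adj_update_succ {N : ℕ} {f : ℕ → α} {c : α} (hadj : ∀ s < N, E (f s) (f (s + 1)))
    (hE : E (f N) c) (s : ℕ) (hs : s < N + 1) :
    E (Function.update f (N + 1) c s) (Function.update f (N + 1) c (s + 1)) := by
  rcases Nat.lt_succ_iff_lt_or_eq.mp hs with hs | rfl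
  · simpa [Function.update_of_ne (by omega : s ≠ N + 1),
      Function.update_of_ne (by omega : s + 1 ≠ N + 1)] using hadj s hs
  · simpa [Function.update_of_ne (by omega : s ≠ s + 1)] using hE

theorem IsSplitWalk.snoc_of_notMem_C {N : ℕ} {f : ℕ → α} {c : α}
    (h : IsSplitWalk E C B N N f) (hC : f N ∉ C) (hE : E (f N) c) :
    IsSplitWalk E C B (N + 1) (N + 1) (Function.update f (N + 1) c) where
  adj := adj_update_succ h.adj hE
  avoidC s hs := by
    rw [Function.update_of_ne (by omega)]
    rcases Nat.lt_succ_iff_lt_or_eq.mp hs with hs | rfl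
    exacts [h.avoidC s hs, hC]
  avoidB s hs hsN := absurd hsN (by omega)

theorem IsSplitWalk.snoc_of_notMem_B {N m : ℕ} {f : ℕ → α} {c : α}
    (h : IsSplitWalk E C B N m f) (hm : m ≤ N) (hE : E (f N) c) (hB : c ∉ B) :
    IsSplitWalk E C B (N + 1) m (Function.update f (N + 1) c) where
  adj := adj_update_succ h.adj hE
  avoidC s hs := by
    rw [Function.update_of_ne (by omega)]
    exact h.avoidC s hs
  avoidB s hs hsN := by
    rcases Nat.lt_succ_iff_lt_or_eq.mp (Nat.lt_succ_of_le hsN) with hsN | rfl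
    · rw [Function.update_of_ne (by omega)]
      exact h.avoidB s hs (by omega)
    · simpa using hB

theorem exists_isSplitWalk_of_reflTransGen_avoidC {a v : α}
    (h : ReflTransGen (fun i j => i ∉ C ∧ E i j) a v) :
    ∃ N f, IsSplitWalk E C B N N f ∧ f 0 = a ∧ f N = v := by
  induction h with
  | refl => exact ⟨0, fun _ => a, ⟨by simp, by simp, by omega⟩, rfl, rfl⟩
  | tail _ hstep ih =>
    obtain ⟨N, f, hf, h0, rfl⟩ := ih
    exact ⟨N + 1, _, hf.snoc_of_notMem_C hstep.1 hstep.2, by simpa using h0, by simp⟩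

theorem exists_isSplitWalk_of_reflTransGen {a v b : α}
    (hav : ReflTransGen (fun i j => i ∉ C ∧ E i j) a v)
    (hvb : ReflTransGen (fun i j => E i j ∧ j ∉ B) v b) :
    ∃ N m f, IsSplitWalk E C B N m f ∧ m ≤ N ∧ f 0 = a ∧ f N = b := by
  induction hvb with
  | refl =>
    obtain ⟨N, f, hf, h0, hN⟩ := exists_isSplitWalk_of_reflTransGen_avoidC (B := B) hav
    exact ⟨N, N, f, hf, le_rfl, h0, hN⟩
  | tail _ hstep ih =>
    obtain ⟨N, m, f, hf, hm, h0, rfl⟩ := ih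
    exact ⟨N + 1, m, _, hf.snoc_of_notMem_B hm hstep.1 hstep.2, by omega, by simpa using h0,
      by simp⟩

/-- Cutting out the closed subwalk `f a, …, f (a + d)` keeps a split point. -/
theorem IsSplitWalk.cut {N m a d : ℕ} {f : ℕ → α} (h : IsSplitWalk E C B N m f)
    (hd : 0 < d) (hadN : a + d ≤ N) (hcycle : f (a + d) = f a) :
    ∃ m' f', IsSplitWalk E C B (N - d) m' f' ∧ f' 0 = f 0 ∧ f' (N - d) = f N := by
  set σ : ℕ → ℕ := fun s => if s ≤ a then s else s + d
  have hσ_of_le : ∀ s ≤ a, f (σ s) = f s := fun s hs => by simp [σ, hs]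
  have hσ_of_ge : ∀ s ≥ a, f (σ s) = f (s + d) := fun s hs => by
    rcases hs.eq_or_lt with rfl | hs
    · simp [σ, hcycle]
    · simp [σ, show ¬s ≤ a by omega]
  set m' := if m ≤ a then m else if m < a + d then a else m - d
  refine ⟨m', f ∘ σ, ⟨fun s hs => ?_, fun s hs => ?_, fun s hs hsN => ?_⟩, hσ_of_le 0 (by omega),
    by simpa [show N - d + d = N by omega] using hσ_of_ge (N - d) (by omega)⟩
  · simp only [Function.comp_apply]
    rcases lt_or_ge s a with hsa | hsa
    · rw [hσ_of_le s hsa.le, hσ_of_le (s + 1) hsa]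
      exact h.adj s (by omega)
    · rw [hσ_of_ge s hsa, hσ_of_ge (s + 1) (by omega), show s + 1 + d = s + d + 1 by omega]
      exact h.adj (s + d) (by omega)
  · exact h.avoidC _ (by simp only [σ, m'] at hs ⊢; split_ifs at hs ⊢ <;> omega)
  · exact h.avoidB _ (by simp only [σ, m'] at hs ⊢; split_ifs at hs ⊢ <;> omega)
      (by simp only [σ]; split_ifs <;> omega)

theorem IsSplitWalk.exists_injOn {N m : ℕ} {f : ℕ → α} (h : IsSplitWalk E C B N m f) :
    ∃ N' m' f', IsSplitWalk E C B N' m' f' ∧ f' 0 = f 0 ∧ f' N' = f N ∧ InjOn f' (Iic N') := by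
  induction N using Nat.strong_induction_on generalizing m f with
  | _ N ih =>
    by_cases hinj : InjOn f (Iic N)
    · exact ⟨N, m, f, h, rfl, rfl, hinj⟩
    obtain ⟨a, b, -, hb, hab, hlt⟩ : ∃ a b, a ≤ N ∧ b ≤ N ∧ f a = f b ∧ a < b := by
      simp only [InjOn, mem_Iic, not_forall] at hinj
      obtain ⟨a, ha, b, hb, hab, hne⟩ := hinj
      rcases Nat.lt_or_gt_of_ne hne with hlt | hlt
      exacts [⟨a, b, ha, hb, hab, hlt⟩, ⟨b, a, hb, ha, hab.symm, hlt⟩]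
    obtain ⟨m', f', hf', h0, hN⟩ :=
      h.cut (a := a) (d := b - a) (by omega) (by omega) (by rw [Nat.add_sub_cancel' hlt.le, hab])
    obtain ⟨N'', m'', f'', hf'', h0', hN', hinj'⟩ := ih (N - (b - a)) (by omega) hf'
    exact ⟨N'', m'', f'', hf'', h0'.trans h0, hN'.trans hN, hinj'⟩

theorem isPath_of_injOn {N : ℕ} {f : ℕ → α} (hadj : ∀ s < N, E (f s) (f (s + 1)))
    (hinj : InjOn f (Iic N)) : IsPath E (fun s : Fin (N + 1) => f s) :=
  ⟨fun s t hst => Fin.ext (hinj (by simpa using s.is_le) (by simpa using t.is_le) hst),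
    fun s => by simpa using hadj s s.isLt⟩

theorem IsSplitWalk.false_of_forall_isPath {D T : Set α}
    (hpaths : ∀ (k : ℕ) (p : Fin (k + 1) → α), IsPath E p → p 0 ∈ D → p (Fin.last k) ∈ T →
      ∃ o i : Fin (k + 1), p o ∈ C ∧ p i ∈ B ∧ o < i)
    {N m : ℕ} {f : ℕ → α} (h : IsSplitWalk E C B N m f) (h0 : f 0 ∈ D) (hN : f N ∈ T) :
    False := by
  obtain ⟨N', m', f', hf', h0', hN', hinj⟩ := h.exists_injOn
  obtain ⟨o, i, hoC, hiB, hoi⟩ := hpaths N' _ (isPath_of_injOn hf'.adj hinj)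
    (by simpa [h0'] using h0) (by simpa [hN'] using hN)
  have hmo : m' ≤ o := not_lt.mp fun ho => hf'.avoidC o ho hoC
  have him : (i : ℕ) ≤ m' := not_lt.mp fun hi => hf'.avoidB i hi (Nat.lt_succ_iff.mp i.isLt) hiB
  exact absurd (Fin.lt_def.mp hoi) (by omega)

end SplitWalk

theorem DDPDF_sufficiency_general (E : V → V → Prop) (D T B C Sstar Zstar : Set V)
    -- `S*` is the minimal conditioned invariant superset of `𝒟`
    (hSmin : ∀ W : Set V, D ⊆ W → (∀ i ∈ W, i ∉ C → ∀ j, E i j → j ∈ W) → Sstar ⊆ W)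
    -- `Z*` is the maximal controlled invariant subset of `V ∖ 𝒯`
    (hZmax : ∀ W : Set V, W ⊆ Tᶜ → (∀ i ∈ W, ∀ j, E i j → j ∈ W ∪ B) → W ⊆ Zstar)
    -- on every `𝒟`-to-`𝒯` path the minimal output index precedes the maximal input index
    (hpaths : ∀ (k : ℕ) (p : Fin (k + 1) → V), IsPath E p →
      p 0 ∈ D → p (Fin.last k) ∈ T →
      ∃ o i : Fin (k + 1),
        o ≠ Fin.last k ∧ p o ∈ C ∧ (∀ s : Fin (k + 1), s ≠ Fin.last k → p s ∈ C → o ≤ s) ∧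
        i ≠ 0 ∧ p i ∈ B ∧ (∀ s : Fin (k + 1), s ≠ 0 → p s ∈ B → s ≤ i) ∧
        o < i) :
    Sstar ⊆ Zstar := by
  set R : Set V := {v | ∃ d ∈ D, Relation.ReflTransGen (fun i j => i ∉ C ∧ E i j) d v}
  set Q : Set V := {v | ∀ t ∈ T, ¬Relation.ReflTransGen (fun i j => E i j ∧ j ∉ B) v t}
  have hSR : Sstar ⊆ R := hSmin R (fun d hd => ⟨d, hd, .refl⟩)
    fun i ⟨d, hd, hdi⟩ hiC j hij => ⟨d, hd, hdi.tail ⟨hiC, hij⟩⟩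
  have hQZ : Q ⊆ Zstar := hZmax Q (fun v hv hvT => hv v hvT .refl) fun i hi j hij => by
    by_cases hjB : j ∈ B
    · exact Or.inr hjB
    · exact Or.inl fun t ht hjt => hi t ht (hjt.head ⟨hij, hjB⟩)
  have hRQ : R ⊆ Q := by
    rintro v ⟨d, hd, hdv⟩ t ht hvt
    obtain ⟨N, m, f, hf, -, h0, hN⟩ := exists_isSplitWalk_of_reflTransGen hdv hvt
    refine hf.false_of_forall_isPath (fun k p hp h0 hT => ?_) (h0 ▸ hd) (hN ▸ ht)
    obtain ⟨o, i, -, hoC, -, -, hiB, -, hoi⟩ := hpaths k p hp h0 hT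
    exact ⟨o, i, hoC, hiB, hoi⟩
  exact hSR.trans (hRQ.trans hQZ)

/-- Sufficiency direction of the graphical DDPDF solvability condition: if along
every directed path from `𝒟` to `𝒯` the first output node (other than the last
node) comes strictly before the last input node (other than the first node), then
the minimal conditioned invariant superset `S*` of `𝒟` is contained in the maximal
controlled invariant subset `Z*` of `V ∖ 𝒯`. -/
theorem DDPDF_sufficiency (E : V → V → Prop) (D T B C Sstar Zstar : Set V)
    (hDT : D ∩ T = ∅) (hDB : D ∩ B = ∅) (hTC : T ∩ C = ∅)
    -- `S*` is the minimal conditioned invariant superset of `𝒟`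
    (hSsub : D ⊆ Sstar)
    (hSinv : ∀ i ∈ Sstar, i ∉ C → ∀ j, E i j → j ∈ Sstar)
    (hSmin : ∀ W : Set V, D ⊆ W → (∀ i ∈ W, i ∉ C → ∀ j, E i j → j ∈ W) → Sstar ⊆ W)
    -- `Z*` is the maximal controlled invariant subset of `V ∖ 𝒯`
    (hZsub : Zstar ⊆ Tᶜ)
    (hZinv : ∀ i ∈ Zstar, ∀ j, E i j → j ∈ Zstar ∪ B)
    (hZmax : ∀ W : Set V, W ⊆ Tᶜ → (∀ i ∈ W, ∀ j, E i j → j ∈ W ∪ B) → W ⊆ Zstar)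
    -- on every `𝒟`-to-`𝒯` path the minimal output index precedes the maximal input index
    (hpaths : ∀ (k : ℕ) (p : Fin (k + 1) → V), IsPath E p →
      p 0 ∈ D → p (Fin.last k) ∈ T →
      ∃ o i : Fin (k + 1),
        o ≠ Fin.last k ∧ p o ∈ C ∧ (∀ s : Fin (k + 1), s ≠ Fin.last k → p s ∈ C → o ≤ s) ∧
        i ≠ 0 ∧ p i ∈ B ∧ (∀ s : Fin (k + 1), s ≠ 0 → p s ∈ B → s ≤ i) ∧
        o < i) :
    Sstar ⊆ Zstar :=
  DDPDF_sufficiency_general E D T B C Sstar Zstar hSmin hZmax hpaths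
end

section
/- Let G = (V,E), 𝒟, 𝒯, ℬ, 𝒞 ⊆ V with 𝒟 ∩ 𝒯 = ∅, 𝒟 ∩ ℬ = ∅, 𝒯 ∩ 𝒞 = ∅, and suppose S* ⊆ Z*, where S* is the minimal conditioned invariant (w.r.t. 𝒞) superset of 𝒟 and Z* the maximal controlled invariant (w.r.t. ℬ) subset of V ∖ 𝒯. Then for every directed path P = (v_1, …, v_κ) with v_1 ∈ 𝒟 and v_κ ∈ 𝒯, there do not exist indices o ≥ i with v_o ∈ 𝒞, o < κ, and v_i ∈ ℬ, i ≥ 2, such that o = min{s < κ : v_s ∈ 𝒞} and i = max{s ≥ 2 : v_s ∈ ℬ}; i.e., if both indices exist then o < i. -/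
variable {V : Type*} [Fintype V]

/-- Necessity direction of the graphical DDPDF condition: if the minimal conditioned
invariant superset `S*` of `𝒟` is contained in the maximal controlled invariant
subset `Z*` of `V ∖ 𝒯`, then along every directed path from `𝒟` to `𝒯`, whenever
the minimal output index `o` (excluding the last node) and the maximal input index
`i` (excluding the first node) both exist, they satisfy `o < i`. -/
theorem DDPDF_necessity (E : V → V → Prop) (D T B C Sstar Zstar : Set V)
    (hDT : D ∩ T = ∅) (hDB : D ∩ B = ∅) (hTC : T ∩ C = ∅)
    -- `S*` is the minimal conditioned invariant superset of `𝒟`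
    (hSsub : D ⊆ Sstar)
    (hSinv : ∀ i ∈ Sstar, i ∉ C → ∀ j, E i j → j ∈ Sstar)
    (hSmin : ∀ W : Set V, D ⊆ W → (∀ i ∈ W, i ∉ C → ∀ j, E i j → j ∈ W) → Sstar ⊆ W)
    -- `Z*` is the maximal controlled invariant subset of `V ∖ 𝒯`
    (hZsub : Zstar ⊆ Tᶜ)
    (hZinv : ∀ i ∈ Zstar, ∀ j, E i j → j ∈ Zstar ∪ B)
    (hZmax : ∀ W : Set V, W ⊆ Tᶜ → (∀ i ∈ W, ∀ j, E i j → j ∈ W ∪ B) → W ⊆ Zstar)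
    (hSZ : Sstar ⊆ Zstar) :
    ∀ (k : ℕ) (p : Fin (k + 1) → V), IsPath E p →
      p 0 ∈ D → p (Fin.last k) ∈ T →
      ∀ o i : Fin (k + 1),
        o ≠ Fin.last k → p o ∈ C → (∀ s : Fin (k + 1), s ≠ Fin.last k → p s ∈ C → o ≤ s) →
        i ≠ 0 → p i ∈ B → (∀ s : Fin (k + 1), s ≠ 0 → p s ∈ B → s ≤ i) →
        o < i := by
  intro k p hp h0 hlast o i holast hoC homin hi0 hiB himax
  by_contra hcon
  push_neg at hcon
  -- i ≤ o
  have hok : o.val < k := by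
    have := o.isLt
    rcases Nat.lt_or_ge o.val k with h | h
    · exact h
    · exact absurd (Fin.ext (by simp only [Fin.val_last]; omega) : o = Fin.last k) holast
  -- Claim 1: all nodes up to o are in Sstar
  have claim1 : ∀ n : ℕ, ∀ hn : n ≤ o.val, p ⟨n, by omega⟩ ∈ Sstar := by
    intro n
    induction n with
    | zero => intro _; exact hSsub h0
    | succ m ih =>
      intro hn
      have hm : m ≤ o.val := by omega
      have hmem := ih hm
      have hmC : p ⟨m, by omega⟩ ∉ C := by
        intro hC
        have hle := homin ⟨m, by omega⟩ (by
          intro h; apply absurd (congrArg Fin.val h); simp; omega) hC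
        simp [Fin.le_def] at hle
        omega
      have hedge := hp.2 ⟨m, by omega⟩
      have : p ⟨m + 1, by omega⟩ ∈ Sstar := by
        refine hSinv _ hmem hmC _ ?_
        convert hedge using 2 <;> simp [Fin.castSucc, Fin.succ]
      exact this
  -- Claim 2: all nodes from o on are in Zstar
  have claim2 : ∀ m : ℕ, ∀ hm : o.val + m ≤ k, p ⟨o.val + m, by omega⟩ ∈ Zstar := by
    intro m
    induction m with
    | zero =>
      intro _
      have := claim1 o.val le_rfl
      exact hSZ (by simpa using this)
    | succ m ih =>
      intro hm
      have hmem := ih (by omega)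
      have hedge := hp.2 ⟨o.val + m, by omega⟩
      have hnext : p ⟨o.val + m + 1, by omega⟩ ∈ Zstar ∪ B := by
        refine hZinv _ hmem _ ?_
        convert hedge using 2 <;> simp [Fin.castSucc, Fin.succ] <;> omega
      rcases hnext with h | h
      · exact h
      · exfalso
        have hle := himax ⟨o.val + m + 1, by omega⟩ (by
          intro h; apply absurd (congrArg Fin.val h); simp) h
        rw [Fin.le_def] at hle hcon
        simp only [Fin.val_mk] at hle
        omega
  -- p last ∈ Zstar contradicts p last ∈ T
  have := claim2 (k - o.val) (by omega)
  have hZ : p (Fin.last k) ∈ Zstar := by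
    convert this using 2
    simp [Fin.last]
    omega
  exact hZsub hZ hlast
end

section
/- Let A ∈ ℝ^{n×n}, B ∈ ℝ^{n×m} with orthonormal columns (standard basis vectors), C ∈ ℝ^{p×n} with orthonormal rows (standard basis vectors), and let W ⊆ ℝ^n be a coordinate subspace such that: (i) every edge of A leaving W (i.e., every pair (i,j) with A_{ji} ≠ 0, e_i ∈ W, e_j ∉ W) has e_i ∈ Im Cᵀ and e_j ∈ Im B, (ii) Im B ∩ W = {0}, and the boundary conditions ∂₋(W) = Im Cᵀ-nodes and ∂₊(W) = Im B-nodes hold exactly. Then with G = BᵀACᵀ, the closed-loop matrix A − BGC satisfies (A − BGC)·W ⊆ W. -/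
open Matrix

/-- The coordinate subspace of `Fin n → ℝ` spanned by the standard basis
vectors corresponding to a set of nodes. -/
def coordSub {n : ℕ} (Z : Set (Fin n)) : Submodule ℝ (Fin n → ℝ) :=
  Submodule.span ℝ ((fun i => Pi.single i (1 : ℝ)) '' Z)

/-- Static output feedback friend for a set `W` that is both controlled and
conditioned invariant, with input set equal to the out-boundary and output set
equal to the in-boundary of `W`: the closed-loop matrix `A − BGC` with
`G = BᵀACᵀ` leaves the coordinate subspace `W` invariant. -/
theorem output_feedback_friend {n m p : ℕ} (A : Matrix (Fin n) (Fin n) ℝ)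
    (g : Fin m ↪ Fin n) (c : Fin p ↪ Fin n)
    (B : Matrix (Fin n) (Fin m) ℝ) (C : Matrix (Fin p) (Fin n) ℝ)
    (hB : ∀ i j, B i j = if i = g j then 1 else 0)
    (hC : ∀ j i, C j i = if i = c j then 1 else 0)
    (Wset : Set (Fin n))
    -- (i) every edge leaving `W` starts in an output node and lands in an input node
    (hcross : ∀ i j, A j i ≠ 0 → i ∈ Wset → j ∉ Wset →
      i ∈ Set.range c ∧ j ∈ Set.range g)
    -- (ii) the input nodes are disjoint from `W` and the boundary conditions hold exactly
    (hBW : Set.range g ∩ Wset = ∅)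
    (hCbd : Set.range c = {i | i ∈ Wset ∧ ∃ j, j ∉ Wset ∧ A j i ≠ 0})
    (hBbd : Set.range g = {j | j ∉ Wset ∧ ∃ i, i ∈ Wset ∧ A j i ≠ 0}) :
    (coordSub Wset).map (A - B * (Bᵀ * A * Cᵀ) * C).mulVecLin ≤ coordSub Wset := by

  -- key computation: the feedback term entrywise
  have h1 : ∀ k b, (Bᵀ * A) k b = A (g k) b := by
    intro k b
    simp [Matrix.mul_apply, hB, ite_mul, one_mul, zero_mul]
  have h2 : ∀ k l, (Bᵀ * A * Cᵀ) k l = A (g k) (c l) := by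
    intro k l
    simp [Matrix.mul_apply, h1, hC, mul_ite, mul_one, mul_zero]
  have hBGC : ∀ j i, (B * (Bᵀ * A * Cᵀ) * C) j i =
      if j ∈ Set.range g ∧ i ∈ Set.range c then A j i else 0 := by
    intro j i
    have : (B * (Bᵀ * A * Cᵀ) * C) j i
        = ∑ l, (∑ k, (if j = g k then 1 else 0) * A (g k) (c l)) *
            (if i = c l then 1 else 0) := by
      simp [Matrix.mul_apply, hB, hC, h2, Finset.sum_mul]
    rw [this]
    by_cases hj : j ∈ Set.range g
    · obtain ⟨k0, hk0⟩ := hj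
      by_cases hi : i ∈ Set.range c
      · obtain ⟨l0, hl0⟩ := hi
        rw [if_pos ⟨⟨k0, hk0⟩, ⟨l0, hl0⟩⟩]
        rw [Finset.sum_eq_single l0]
        · rw [Finset.sum_eq_single k0]
          · simp [hk0, hl0]
          · intro k _ hk
            have : j ≠ g k := by
              intro h; exact hk (g.injective (hk0.trans h)).symm
            simp [this]
          · simp
        · intro l _ hl
          have : i ≠ c l := by
            intro h; exact hl (c.injective (hl0.trans h)).symm
          simp [this]
        · simp
      · rw [if_neg (by tauto)]
        apply Finset.sum_eq_zero
        intro l _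
        have : i ≠ c l := fun h => hi ⟨l, h.symm⟩
        simp [this]
    · rw [if_neg (by tauto)]
      apply Finset.sum_eq_zero
      intro l _
      have : ∀ k, (if j = g k then (1:ℝ) else 0) * A (g k) (c l) = 0 := by
        intro k
        have : j ≠ g k := fun h => hj ⟨k, h.symm⟩
        simp [this]
      simp [this]
  -- membership criterion for coordSub
  have hmem : ∀ v : Fin n → ℝ, (∀ j, j ∉ Wset → v j = 0) → v ∈ coordSub Wset := by
    intro v hv
    rw [coordSub]
    have hv' : v = ∑ j : Fin n, v j • (Pi.single j 1 : Fin n → ℝ) := by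
      ext a
      simp [Pi.single_apply, Finset.sum_ite_eq', mul_comm]
    rw [hv']
    apply Submodule.sum_mem
    intro j _
    by_cases hj : j ∈ Wset
    · exact Submodule.smul_mem _ _ (Submodule.subset_span ⟨j, hj, rfl⟩)
    · simp [hv j hj]
  rw [Submodule.map_le_iff_le_comap, coordSub, Submodule.span_le]
  rintro _ ⟨i, hiW, rfl⟩
  simp only [SetLike.mem_coe, Submodule.mem_comap, Matrix.mulVecLin_apply]
  apply hmem
  intro j hjW
  have hcol : (A - B * (Bᵀ * A * Cᵀ) * C).mulVec (Pi.single i 1) j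
      = (A - B * (Bᵀ * A * Cᵀ) * C) j i := by
    simp [Matrix.mulVec, dotProduct, Pi.single_apply, mul_ite]
  rw [hcol, Matrix.sub_apply, hBGC]
  by_cases hA : A j i = 0
  · simp [hA]
  · obtain ⟨hic, hjg⟩ := hcross i j hA hiW hjW
    rw [if_pos ⟨hjg, hic⟩, sub_self]
end

section
/- Let G = (V,E) be a finite digraph, 𝒟 and 𝒯 disjoint node sets, and let ℬ ⊆ V ∖ 𝒟 be a set of minimal cardinality such that every directed path from 𝒟 to 𝒯 intersects ℬ. Let Z*(ℬ) be the maximal controlled invariant (w.r.t. ℬ) subset of V ∖ 𝒯. Then ℬ equals the out-boundary of Z*(ℬ): ℬ = ∂₊(Z*(ℬ)) = {v_j ∉ Z*(ℬ) : ∃ (v_i,v_j) ∈ E, v_i ∈ Z*(ℬ)}; in particular ℬ ∩ Z*(ℬ) = ∅ and every node of ℬ lies on some 𝒟-to-𝒯 path. -/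
/-!
The nodes from which `𝒯` cannot be reached without entering `ℬ` form a controlled invariant
subset of `V ∖ 𝒯` containing `𝒟`, so `𝒟 ⊆ Z*(ℬ)`. A `𝒟`-to-`𝒯` path starts in `Z*(ℬ)` and
ends outside it, so it crosses `∂₊ Z*(ℬ)`; this boundary lies in `ℬ` by invariance and misses
`𝒟`, so it is itself a cut, and minimality of `ℬ` forces equality. Likewise a node of `ℬ` on
no `𝒟`-to-`𝒯` path could be removed from `ℬ`.
-/

variable {V : Type*} [Fintype V]

/-- `B` blocks all `𝒟`-to-`𝒯` directed paths. -/
def BlocksPaths (E : V → V → Prop) (D T B : Set V) : Prop :=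
  ∀ (k : ℕ) (p : Fin (k + 1) → V), IsPath E p →
    p 0 ∈ D → p (Fin.last k) ∈ T → ∃ s, p s ∈ B

theorem Fin.exists_castSucc_mem_succ_notMem {α : Type*} {S : Set α} :
    ∀ {k : ℕ} (p : Fin (k + 1) → α), p 0 ∈ S → p (Fin.last k) ∉ S →
      ∃ i : Fin k, p i.castSucc ∈ S ∧ p i.succ ∉ S
  | 0, _, h0, hlast => absurd h0 hlast
  | k + 1, p, h0, hlast => by
    by_cases h1 : p 1 ∈ S
    · obtain ⟨i, hi⟩ := exists_castSucc_mem_succ_notMem (Fin.tail p) h1 hlast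
      exact ⟨i.succ, hi⟩
    · exact ⟨0, h0, h1⟩

section Paths

variable {α : Type*} {E : α → α → Prop} {k : ℕ} {p : Fin (k + 1) → α}

namespace IsPath

theorem mono {E' : α → α → Prop} (hEE' : ∀ i j, E i j → E' i j) (hp : IsPath E p) :
    IsPath E' p :=
  ⟨hp.1, fun i => hEE' _ _ (hp.2 i)⟩

theorem single (v : α) : IsPath E (fun _ : Fin 1 => v) :=
  ⟨Function.injective_of_subsingleton (α := Fin 1) _, fun i => i.elim0⟩

theorem tail {p : Fin (k + 2) → α} (hp : IsPath E p) : IsPath E (Fin.tail p) :=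
  ⟨hp.1.comp (Fin.succ_injective _), fun i => by
    simpa only [Fin.tail, Fin.succ_castSucc] using hp.2 i.succ⟩

theorem cons (hp : IsPath E p) {v : α} (hv : v ∉ Set.range p) (hE : E v (p 0)) :
    IsPath E (Fin.cons v p : Fin (k + 2) → α) :=
  ⟨Fin.cons_injective_iff.2 ⟨hv, hp.1⟩, Fin.cases hE fun i => by
    simpa only [← Fin.succ_castSucc, Fin.cons_succ] using hp.2 i⟩

theorem exists_suffix (hp : IsPath E p) (t : Fin (k + 1)) :
    ∃ (m : ℕ) (q : Fin (m + 1) → α),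
      IsPath E q ∧ q 0 = p t ∧ q (Fin.last m) = p (Fin.last k) := by
  induction k with
  | zero => exact ⟨0, p, hp, congrArg p ((Fin.fin_one_eq_zero t).symm), rfl⟩
  | succ k ih =>
    cases t using Fin.cases with
    | zero => exact ⟨_, p, hp, rfl, rfl⟩
    | succ t => simpa only [Fin.tail, Fin.succ_last] using ih hp.tail t

end IsPath

theorem Relation.ReflTransGen.exists_isPath {a b : α}
    (h : Relation.ReflTransGen E a b) :
    ∃ (k : ℕ) (p : Fin (k + 1) → α), IsPath E p ∧ p 0 = a ∧ p (Fin.last k) = b := by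
  induction h using Relation.ReflTransGen.head_induction_on with
  | refl => exact ⟨0, fun _ => b, IsPath.single b, rfl, rfl⟩
  | @head a c hac _ ih =>
    obtain ⟨k, p, hp, rfl, rfl⟩ := ih
    by_cases ha : a ∈ Set.range p
    · obtain ⟨t, rfl⟩ := ha
      exact hp.exists_suffix t
    · exact ⟨k + 1, Fin.cons a p, hp.cons ha hac, rfl, by simp only [Fin.cons_last]⟩

end Paths

section Cuts

variable {α : Type*} {E : α → α → Prop} {B D T W : Set α}

def IsControlledInvariant (E : α → α → Prop) (B W : Set α) : Prop :=
  ∀ i ∈ W, ∀ j, E i j → j ∈ W ∪ B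

def outBoundary (E : α → α → Prop) (W : Set α) : Set α :=
  {j | j ∉ W ∧ ∃ i ∈ W, E i j}

/-- The nodes from which every walk to `T` enters `B` after its first node. -/
def cutOff (E : α → α → Prop) (B T : Set α) : Set α :=
  {v | ∀ t ∈ T, ¬Relation.ReflTransGen (fun i j => E i j ∧ j ∉ B) v t}

theorem cutOff_subset_compl : cutOff E B T ⊆ Tᶜ :=
  fun v hv hvT => hv v hvT .refl

theorem isControlledInvariant_cutOff : IsControlledInvariant E B (cutOff E B T) := by
  intro i hi j hij
  by_cases hjB : j ∈ B
  · exact .inr hjB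
  · exact .inl fun t ht hjt => hi t ht (.head ⟨hij, hjB⟩ hjt)

theorem BlocksPaths.subset_cutOff (hBD : B ⊆ Dᶜ) (hblock : BlocksPaths E D T B) :
    D ⊆ cutOff E B T := by
  intro d hd t ht hdt
  obtain ⟨k, p, hp, rfl, hpt⟩ := hdt.exists_isPath
  obtain ⟨s, hs⟩ := hblock k p (hp.mono fun _ _ => And.left) hd (hpt ▸ ht)
  cases s using Fin.cases with
  | zero => exact hBD hs hd
  | succ s => exact (hp.2 s).2 hs

theorem IsControlledInvariant.outBoundary_subset (hW : IsControlledInvariant E B W) :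
    outBoundary E W ⊆ B :=
  fun _ ⟨hjW, _, hiW, hij⟩ => (hW _ hiW _ hij).resolve_left hjW

theorem outBoundary_subset_compl (hDW : D ⊆ W) : outBoundary E W ⊆ Dᶜ :=
  fun _ hj hjD => hj.1 (hDW hjD)

theorem outBoundary_inter_self : outBoundary E W ∩ W = ∅ :=
  Set.eq_empty_of_forall_notMem fun _ hj => hj.1.1 hj.2

theorem blocksPaths_outBoundary (hDW : D ⊆ W) (hWT : W ⊆ Tᶜ) :
    BlocksPaths E D T (outBoundary E W) := by
  intro k p hp hp0 hpk
  obtain ⟨i, hi, hi'⟩ :=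
    Fin.exists_castSucc_mem_succ_notMem p (hDW hp0) fun h => hWT h hpk
  exact ⟨i.succ, hi', _, hi, hp.2 i⟩

theorem BlocksPaths.exists_isPath_through_of_minimal (hfin : B.Finite) (hBD : B ⊆ Dᶜ)
    (hblock : BlocksPaths E D T B)
    (hmin : ∀ B' : Set α, B' ⊆ Dᶜ → BlocksPaths E D T B' → B.ncard ≤ B'.ncard)
    {b : α} (hb : b ∈ B) :
    ∃ (k : ℕ) (p : Fin (k + 1) → α), IsPath E p ∧
      p 0 ∈ D ∧ p (Fin.last k) ∈ T ∧ ∃ s, p s = b := by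
  by_contra! hnot
  have hblock' : BlocksPaths E D T (B \ {b}) := by
    intro k p hp hp0 hpk
    obtain ⟨s, hs⟩ := hblock k p hp hp0 hpk
    exact ⟨s, hs, hnot k p hp hp0 hpk s⟩
  exact (Set.ncard_sdiff_singleton_lt_of_mem hb hfin).not_ge
    (hmin _ (Set.sdiff_subset.trans hBD) hblock')

end Cuts

theorem minimal_input_cut_eq_out_boundary_general (E : V → V → Prop) (D T B Zstar : Set V)
    (hBD : B ⊆ Dᶜ)
    (hblock : BlocksPaths E D T B)
    (hmin : ∀ B' : Set V, B' ⊆ Dᶜ → BlocksPaths E D T B' → B.ncard ≤ B'.ncard)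
    -- `Z*(ℬ)` is the maximal controlled invariant (w.r.t. `ℬ`) subset of `V ∖ 𝒯`
    (hZsub : Zstar ⊆ Tᶜ)
    (hZinv : ∀ i ∈ Zstar, ∀ j, E i j → j ∈ Zstar ∪ B)
    (hZmax : ∀ W : Set V, W ⊆ Tᶜ → (∀ i ∈ W, ∀ j, E i j → j ∈ W ∪ B) → W ⊆ Zstar) :
    B = {j | j ∉ Zstar ∧ ∃ i ∈ Zstar, E i j} ∧
    B ∩ Zstar = ∅ ∧
    (∀ b ∈ B, ∃ (k : ℕ) (p : Fin (k + 1) → V), IsPath E p ∧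
      p 0 ∈ D ∧ p (Fin.last k) ∈ T ∧ ∃ s, p s = b) := by
  have hDZ : D ⊆ Zstar :=
    (hblock.subset_cutOff hBD).trans (hZmax _ cutOff_subset_compl isControlledInvariant_cutOff)
  have hB : B = outBoundary E Zstar :=
    (Set.eq_of_subset_of_ncard_le (IsControlledInvariant.outBoundary_subset hZinv)
      (hmin _ (outBoundary_subset_compl hDZ) (blocksPaths_outBoundary hDZ hZsub))).symm
  refine ⟨hB, hB ▸ outBoundary_inter_self, fun b hb => ?_⟩
  exact hblock.exists_isPath_through_of_minimal B.toFinite hBD hmin hb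

/-- If `ℬ ⊆ V ∖ 𝒟` is a minimum cardinality node set blocking all `𝒟`-to-`𝒯`
paths, then `ℬ` equals the out-boundary of the maximal controlled invariant subset
`Z*(ℬ)` of `V ∖ 𝒯`; in particular `ℬ ∩ Z*(ℬ) = ∅` and every node of `ℬ` lies on
some `𝒟`-to-`𝒯` path. -/
theorem minimal_input_cut_eq_out_boundary (E : V → V → Prop) (D T B Zstar : Set V)
    (hDT : D ∩ T = ∅) (hBD : B ⊆ Dᶜ)
    (hblock : BlocksPaths E D T B)
    (hmin : ∀ B' : Set V, B' ⊆ Dᶜ → BlocksPaths E D T B' → B.ncard ≤ B'.ncard)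
    -- `Z*(ℬ)` is the maximal controlled invariant (w.r.t. `ℬ`) subset of `V ∖ 𝒯`
    (hZsub : Zstar ⊆ Tᶜ)
    (hZinv : ∀ i ∈ Zstar, ∀ j, E i j → j ∈ Zstar ∪ B)
    (hZmax : ∀ W : Set V, W ⊆ Tᶜ → (∀ i ∈ W, ∀ j, E i j → j ∈ W ∪ B) → W ⊆ Zstar) :
    B = {j | j ∉ Zstar ∧ ∃ i ∈ Zstar, E i j} ∧
    B ∩ Zstar = ∅ ∧
    (∀ b ∈ B, ∃ (k : ℕ) (p : Fin (k + 1) → V), IsPath E p ∧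
      p 0 ∈ D ∧ p (Fin.last k) ∈ T ∧ ∃ s, p s = b) :=
  minimal_input_cut_eq_out_boundary_general E D T B Zstar hBD hblock hmin hZsub hZinv hZmax
end
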